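/- arXiv:2210.10691 — 2 statements merged into one kernel-verified Lean document; each statement's English description precedes it below -/
import Mathlib

section
/- Let PZ = ⟨c, G, G_I, E⟩_PZ be a polynomial zonotope, and let F = {x | A x ≤ b} be a polytope with c_F rows. Suppose α ∈ [-1,1]^p satisfies, for some row l, the inequality Σ_{i=1}^h (Π_k α_k^{E_{(k,i)}}) A_{(l,·)} G_{(·,i)} > b_{(l)} − A_{(l,·)} c + Σ_{j=1}^q |A_{(l,·)} G_{I(·,j)}|. Then for every β ∈ [-1,1]^q, the point c + Σ_i (Π_k α_k^{E_{(k,i)}}) G_{(·,i)} + Σ_j β_j G_{I(·,j)} is not in F. -/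
/-- Core of Theorem 1: if the factors α violate the polynomial level-set
constraint for some halfspace of the polytope F, then the parameterized point
lies outside F for all values of the independent factors β. -/
theorem stmt_8 {n h q p cF : ℕ} (c : Fin n → ℝ) (G : Matrix (Fin n) (Fin h) ℝ)
    (GI : Matrix (Fin n) (Fin q) ℝ) (E : Matrix (Fin p) (Fin h) ℕ)
    (A : Matrix (Fin cF) (Fin n) ℝ) (b : Fin cF → ℝ)
    (α : Fin p → ℝ) (hα : ∀ k, α k ∈ Set.Icc (-1 : ℝ) 1) (l : Fin cF)
    (hviol : ∑ i, (∏ k, α k ^ E k i) * (∑ d, A l d * G d i) >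
      b l - (∑ d, A l d * c d) + ∑ j, |∑ d, A l d * GI d j|) :
    ∀ β : Fin q → ℝ, (∀ j, β j ∈ Set.Icc (-1 : ℝ) 1) →
    (fun d => c d + ∑ i, (∏ k, α k ^ E k i) * G d i + ∑ j, β j * GI d j)
      ∉ {x : Fin n → ℝ | ∀ l', ∑ d, A l' d * x d ≤ b l'} := by
  intro β hβ hmem
  have hle := hmem l
  simp only at hle
  have hexp : ∑ d, A l d * (c d + ∑ i, (∏ k, α k ^ E k i) * G d i + ∑ j, β j * GI d j)
      = (∑ d, A l d * c d) + (∑ i, (∏ k, α k ^ E k i) * (∑ d, A l d * G d i))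
        + (∑ j, β j * (∑ d, A l d * GI d j)) := by
    simp only [mul_add, Finset.sum_add_distrib, Finset.mul_sum]
    rw [Finset.sum_comm (s := Finset.univ) (t := Finset.univ)
      (f := fun d i => A l d * ((∏ k, α k ^ E k i) * G d i)),
      Finset.sum_comm (s := Finset.univ) (t := Finset.univ)
      (f := fun d j => A l d * (β j * GI d j))]
    refine congrArg₂ (· + ·) (congrArg₂ (· + ·) rfl ?_) ?_ <;>
      exact Finset.sum_congr rfl fun _ _ => Finset.sum_congr rfl fun _ _ => by ring
  rw [hexp] at hle
  have hb : ∀ j, β j * (∑ d, A l d * GI d j) ≥ -|∑ d, A l d * GI d j| := by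
    intro j
    have := (hβ j)
    calc β j * (∑ d, A l d * GI d j) ≥ -(|β j| * |∑ d, A l d * GI d j|) := neg_abs_le _ |>.trans_eq' (by rw [abs_mul])
      _ ≥ -(1 * |∑ d, A l d * GI d j|) := by
          apply neg_le_neg
          exact mul_le_mul_of_nonneg_right (abs_le.mpr ⟨this.1, this.2⟩) (abs_nonneg _)
      _ = -|∑ d, A l d * GI d j| := by ring
  have hsum : ∑ j, β j * (∑ d, A l d * GI d j) ≥ -∑ j, |∑ d, A l d * GI d j| := by
    rw [← Finset.sum_neg_distrib]
    exact Finset.sum_le_sum fun j _ => hb j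
  linarith
end

section
/- Constraint grouping is sound: let a, a' ∈ R^h, b ∈ R and set ā = (a + a')/2, amplitude δ = |a − a'|/2 (componentwise). For α in a box [-1,1]^p and monomials m_i(α) = Π_k α_k^{E_{(k,i)}}, if Σ_i ā_i m_i(α) ≤ b − Σ_i δ_i, then both Σ_i a_i m_i(α) ≤ b and Σ_i a'_i m_i(α) ≤ b hold. -/
/-- Soundness of constraint grouping: if the averaged constraint with
tightened offset holds, then both original polynomial constraints hold. -/
theorem stmt_12 {h p : ℕ} (a a' : Fin h → ℝ) (b : ℝ)
    (E : Matrix (Fin p) (Fin h) ℕ) (α : Fin p → ℝ)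
    (hα : ∀ k, α k ∈ Set.Icc (-1 : ℝ) 1)
    (hgroup : ∑ i, (a i + a' i) / 2 * (∏ k, α k ^ E k i) ≤
      b - ∑ i, |a i - a' i| / 2) :
    (∑ i, a i * (∏ k, α k ^ E k i) ≤ b) ∧
    (∑ i, a' i * (∏ k, α k ^ E k i) ≤ b) := by
  have hm : ∀ i, |∏ k, α k ^ E k i| ≤ 1 := by
    intro i
    rw [Finset.abs_prod]
    apply Finset.prod_le_one
    · intro k _; positivity
    · intro k _
      rw [abs_pow]
      apply pow_le_one₀ (abs_nonneg _)
      exact abs_le.2 ⟨(hα k).1, (hα k).2⟩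
  have key : ∀ c c' : Fin h → ℝ,
      (∑ i, (c i + c' i) / 2 * (∏ k, α k ^ E k i) ≤
        b - ∑ i, |c i - c' i| / 2) →
      ∑ i, c i * (∏ k, α k ^ E k i) ≤ b := by
    intro c c' hg
    have : ∑ i, c i * (∏ k, α k ^ E k i)
        ≤ ∑ i, ((c i + c' i) / 2 * (∏ k, α k ^ E k i) + |c i - c' i| / 2) := by
      apply Finset.sum_le_sum
      intro i _
      have h1 : c i * (∏ k, α k ^ E k i)
          = (c i + c' i) / 2 * (∏ k, α k ^ E k i)
            + (c i - c' i) / 2 * (∏ k, α k ^ E k i) := by ring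
      rw [h1]
      have h2 : (c i - c' i) / 2 * (∏ k, α k ^ E k i) ≤ |c i - c' i| / 2 := by
        calc (c i - c' i) / 2 * (∏ k, α k ^ E k i)
            ≤ |(c i - c' i) / 2 * (∏ k, α k ^ E k i)| := le_abs_self _
          _ = |c i - c' i| / 2 * |∏ k, α k ^ E k i| := by
              rw [abs_mul, abs_div, abs_two]
          _ ≤ |c i - c' i| / 2 * 1 :=
              mul_le_mul_of_nonneg_left (hm i) (by positivity)
          _ = |c i - c' i| / 2 := mul_one _
      linarith
    rw [Finset.sum_add_distrib] at this
    linarith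
  refine ⟨key a a' hgroup, key a' a ?_⟩
  have e1 : ∀ i : Fin h, (a' i + a i) / 2 = (a i + a' i) / 2 := fun i => by ring
  have e2 : ∀ i : Fin h, |a' i - a i| / 2 = |a i - a' i| / 2 := fun i => by
    rw [abs_sub_comm]
  simp only [e1, e2]
  exact hgroup
end
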